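/- arXiv:2107.05273 — 2 statements merged into one kernel-verified Lean document; each statement's English description precedes it below -/
import Mathlib

section
/- Let G be a group, K ⊆ G finite, δ > 0, and let B ⊆ G be a finite set that can be written as the union of a set S₁ with |S₁| ≤ (δ/(2|K|))|B| and a disjoint union ⨆_γ E_γ of finitely many sets each of which is (K, δ/2)-invariant. Assume |∂_K (B ∩ S₁)| ≤ |K| |B ∩ S₁|. Then B is (K, δ)-invariant, i.e. |∂_K B| ≤ δ|B|. -/
/-- The `K`-boundary of a subset `F` of a group `G`. -/
def kBoundary {G : Type*} [Group G] (K F : Set G) : Set G :=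
  {t | (∃ k ∈ K, k * t ∈ F) ∧ (∃ k ∈ K, k * t ∉ F)}

/-- `F` is `(K, δ)`-invariant if `|∂_K F| ≤ δ |F|`. -/
def FolnerInvariant {G : Type*} [Group G] (K F : Set G) (δ : ℝ) : Prop :=
  ((kBoundary K F).ncard : ℝ) ≤ δ * F.ncard

lemma kBoundary_finite {G : Type*} [Group G] {K F : Set G} (hK : K.Finite) (hF : F.Finite) :
    (kBoundary K F).Finite := by
  have h : kBoundary K F ⊆ ⋃ k ∈ K, (fun x => k⁻¹ * x) '' F := by
    rintro t ⟨⟨k, hk, hkt⟩, -⟩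
    exact Set.mem_biUnion hk ⟨k * t, hkt, by group⟩
  exact (hK.biUnion fun k _ => hF.image _).subset h

lemma kBoundary_union_subset {G : Type*} [Group G] (K A C : Set G) :
    kBoundary K (A ∪ C) ⊆ kBoundary K A ∪ kBoundary K C := by
  rintro t ⟨⟨k, hk, hkt⟩, ⟨k', hk', hk't⟩⟩
  rcases hkt with h | h
  · exact Or.inl ⟨⟨k, hk, h⟩, ⟨k', hk', fun hc => hk't (Or.inl hc)⟩⟩
  · exact Or.inr ⟨⟨k, hk, h⟩, ⟨k', hk', fun hc => hk't (Or.inr hc)⟩⟩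

lemma kBoundary_iUnion_subset {G : Type*} [Group G] {Γ : Type*} (K : Set G) (E : Γ → Set G) :
    kBoundary K (⋃ γ, E γ) ⊆ ⋃ γ, kBoundary K (E γ) := by
  rintro t ⟨⟨k, hk, hkt⟩, ⟨k', hk', hk't⟩⟩
  rcases Set.mem_iUnion.1 hkt with ⟨γ, hγ⟩
  exact Set.mem_iUnion.2 ⟨γ, ⟨k, hk, hγ⟩, ⟨k', hk', fun hc => hk't (Set.mem_iUnion.2 ⟨γ, hc⟩)⟩⟩

lemma ncard_biUnion_le {α γ : Type*} (s : Finset γ) (f : γ → Set α) (hf : ∀ i, (f i).Finite) :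
    (⋃ i ∈ s, f i).ncard ≤ ∑ i ∈ s, (f i).ncard := by
  classical
  induction s using Finset.induction with
  | empty => simp
  | insert a s hi ih =>
    rw [Finset.set_biUnion_insert, Finset.sum_insert hi]
    have := Set.ncard_union_le (f a) (⋃ i ∈ s, f i)
    omega

lemma sum_ncard_disjoint_eq {α γ : Type*} (s : Finset γ) (f : γ → Set α)
    (hf : ∀ i, (f i).Finite) (hd : Pairwise fun i j => Disjoint (f i) (f j)) :
    ∑ i ∈ s, (f i).ncard = (⋃ i ∈ s, f i).ncard := by
  classical
  induction s using Finset.induction with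
  | empty => simp
  | insert a s hi ih =>
    have hfin2 : (⋃ i ∈ s, f i).Finite := by
      apply Set.Finite.biUnion s.finite_toSet
      exact fun i _ => hf i
    have hdis : Disjoint (f a) (⋃ i ∈ s, f i) :=
      Set.disjoint_iUnion_right.2 fun i => Set.disjoint_iUnion_right.2 fun his =>
        hd (fun h => hi (h ▸ his))
    rw [Finset.set_biUnion_insert, Finset.sum_insert hi, ih,
      Set.ncard_union_eq hdis (hf a) hfin2]

/-- If a finite set `B` is the union of a small set `S₁` (of size at most `(δ/(2|K|))|B|`,
and whose part inside `B` has boundary of size at most `|K| |B ∩ S₁|`) and a disjoint union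
of finitely many `(K, δ/2)`-invariant sets, then `B` is `(K, δ)`-invariant. -/
theorem invariant_of_decomposition {G : Type*} [Group G] {Γ : Type*} [Fintype Γ]
    (K : Set G) (hK : K.Finite) (δ : ℝ) (hδ : 0 < δ)
    (B S₁ : Set G) (hB : B.Finite) (hS₁ : S₁.Finite)
    (E : Γ → Set G) (hE : ∀ γ, (E γ).Finite)
    (hdisj : Pairwise fun γ₁ γ₂ => Disjoint (E γ₁) (E γ₂))
    (hunion : B = S₁ ∪ ⋃ γ, E γ)
    (hS₁small : (S₁.ncard : ℝ) ≤ δ / (2 * K.ncard) * B.ncard)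
    (hEinv : ∀ γ, FolnerInvariant K (E γ) (δ / 2))
    (hS₁bdry : ((kBoundary K (B ∩ S₁)).ncard : ℝ) ≤ K.ncard * (B ∩ S₁).ncard) :
    ((kBoundary K B).ncard : ℝ) ≤ δ * B.ncard := by
  classical
  rcases K.eq_empty_or_nonempty with hKe | hKne
  · have : kBoundary K B = ∅ := by
      ext t; simp [kBoundary, hKe]
    rw [this, Set.ncard_empty, Nat.cast_zero]
    positivity
  -- K nonempty
  have hKpos : 0 < (K.ncard : ℝ) := by
    exact_mod_cast (Set.ncard_pos hK).2 hKne
  have hEsub : ∀ γ, E γ ⊆ B := fun γ => hunion ▸ (Set.subset_iUnion E γ).trans le_sup_right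
  have hBeq : B = (B ∩ S₁) ∪ ⋃ γ, E γ := by
    apply Set.Subset.antisymm
    · intro x hx
      rcases hunion ▸ hx with h | h
      · exact Or.inl ⟨hx, h⟩
      · exact Or.inr h
    · rintro x (⟨h, -⟩ | h)
      · exact h
      · rcases Set.mem_iUnion.1 h with ⟨γ, hγ⟩; exact hEsub γ hγ
  have hsub : kBoundary K B ⊆ kBoundary K (B ∩ S₁) ∪ ⋃ γ, kBoundary K (E γ) := by
    nth_rewrite 1 [hBeq]
    exact (kBoundary_union_subset K _ _).trans
      (Set.union_subset_union_right _ (kBoundary_iUnion_subset K E))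
  have hfin : (kBoundary K (B ∩ S₁) ∪ ⋃ γ, kBoundary K (E γ)).Finite :=
    (kBoundary_finite hK (hB.inter_of_left _)).union
      (Set.finite_iUnion fun γ => kBoundary_finite hK (hE γ))
  -- nat inequality
  have h1 : (kBoundary K B).ncard ≤
      (kBoundary K (B ∩ S₁)).ncard + ∑ γ, (kBoundary K (E γ)).ncard := by
    calc (kBoundary K B).ncard
        ≤ (kBoundary K (B ∩ S₁) ∪ ⋃ γ, kBoundary K (E γ)).ncard :=
          Set.ncard_le_ncard hsub hfin
      _ ≤ (kBoundary K (B ∩ S₁)).ncard + (⋃ γ, kBoundary K (E γ)).ncard :=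
          Set.ncard_union_le _ _
      _ ≤ (kBoundary K (B ∩ S₁)).ncard + ∑ γ, (kBoundary K (E γ)).ncard := by
          have := ncard_biUnion_le (Finset.univ) (fun γ => kBoundary K (E γ))
            (fun γ => kBoundary_finite hK (hE γ))
          simp only [Finset.mem_univ, Set.iUnion_true] at this
          omega
  have hsum_nat : ∑ γ, (E γ).ncard = (⋃ γ, E γ).ncard := by
    have := sum_ncard_disjoint_eq (Finset.univ) E hE hdisj
    simpa using this
  have hsumE : ∑ γ, ((E γ).ncard : ℝ) ≤ (B.ncard : ℝ) := by
    rw [← Nat.cast_sum, hsum_nat]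
    exact_mod_cast Set.ncard_le_ncard (Set.iUnion_subset hEsub) hB
  have hBS : ((B ∩ S₁).ncard : ℝ) ≤ (S₁.ncard : ℝ) := by
    exact_mod_cast Set.ncard_le_ncard Set.inter_subset_right hS₁
  have hmain : ((kBoundary K B).ncard : ℝ)
      ≤ K.ncard * S₁.ncard + (δ / 2) * B.ncard := by
    calc ((kBoundary K B).ncard : ℝ)
        ≤ ((kBoundary K (B ∩ S₁)).ncard : ℝ) + ∑ γ, ((kBoundary K (E γ)).ncard : ℝ) := by
          exact_mod_cast h1
      _ ≤ K.ncard * (B ∩ S₁).ncard + ∑ γ, (δ / 2) * (E γ).ncard :=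
          add_le_add hS₁bdry (Finset.sum_le_sum fun γ _ => hEinv γ)
      _ ≤ K.ncard * S₁.ncard + (δ / 2) * B.ncard := by
          rw [← Finset.mul_sum]
          exact add_le_add (by nlinarith) (by nlinarith)
  have hKS : (K.ncard : ℝ) * S₁.ncard ≤ (δ / 2) * B.ncard := by
    have := mul_le_mul_of_nonneg_left hS₁small (le_of_lt hKpos)
    calc (K.ncard : ℝ) * S₁.ncard ≤ K.ncard * (δ / (2 * K.ncard) * B.ncard) := this
      _ = (δ / 2) * B.ncard := by field_simp
  linarith
end

section
/- Let A and B be finite subsets of a group G with A ⊆ ⟨g⟩ (a subset of the cyclic subgroup generated by g in G = H ⋊ ℤ) and B ⊆ H, such that the products ab for a ∈ A, b ∈ B are pairwise distinct. Let K ⊆ H be finite and δ > 0, and suppose that for every g^i ∈ A the set B is (α^{-i}(K), δ)-invariant in H. Then the rectangle AB is (K, δ)-invariant in G. -/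
open Set SemidirectProduct

/-!
Write the rectangle as `⋃ a ∈ A, a • B`. A point on the `K`-boundary of a union lies on the
`K`-boundary of one of the pieces, and `∂_K (a • B) = a • ∂_{a⁻¹ K a} B`, so
`|∂_K (A B)| ≤ ∑ a ∈ A, |∂_{a⁻¹ K a} B| ≤ |A| δ |B|`, which is `δ |A B|` because the products are
distinct. In `H ⋊_α ℤ`, conjugation by `g ^ i` acts on `H` as `α ^ (-i)`, and the boundary of a
subset of `H` is the same whether it is computed in `H` or in `G`.
-/

open scoped Pointwise

section Boundary

variable {G : Type*} [Group G]

lemma kBoundary_subset_inv_mul (K F : Set G) : kBoundary K F ⊆ K⁻¹ * F := by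
  rintro t ⟨⟨k, hk, hkt⟩, -⟩
  exact ⟨k⁻¹, inv_mem_inv.2 hk, k * t, hkt, inv_mul_cancel_left k t⟩

lemma kBoundary_biUnion_subset {ι : Type*} (K : Set G) (s : Set ι) (F : ι → Set G) :
    kBoundary K (⋃ i ∈ s, F i) ⊆ ⋃ i ∈ s, kBoundary K (F i) := by
  rintro t ⟨⟨k, hk, hkt⟩, k', hk', hk't⟩
  obtain ⟨i, hi, hkti⟩ := mem_iUnion₂.1 hkt
  exact mem_iUnion₂.2 ⟨i, hi, ⟨k, hk, hkti⟩, k', hk', fun h => hk't (mem_biUnion hi h)⟩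

lemma kBoundary_smul_set (K F : Set G) (a : G) :
    kBoundary K (a • F) = a • kBoundary ((fun k => a⁻¹ * k * a) '' K) F := by
  ext t
  simp only [kBoundary, mem_smul_set_iff_inv_smul_mem, smul_eq_mul, mem_ofPred_eq,
    exists_mem_image, mul_assoc, mul_inv_cancel_left]

lemma kBoundary_image_of_injective {H : Type*} [Group H] {f : H →* G}
    (hf : Function.Injective f) (K F : Set H) :
    kBoundary (f '' K) (f '' F) = f '' kBoundary K F := by
  have key : ∀ s, f s ∈ kBoundary (f '' K) (f '' F) ↔ s ∈ kBoundary K F := by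
    simp only [kBoundary, mem_ofPred_eq, exists_mem_image, ← map_mul, hf.mem_set_image,
      implies_true]
  ext t
  constructor
  · intro ht
    obtain ⟨⟨-, ⟨k, -, rfl⟩, b, -, hbt⟩, -⟩ := id ht
    have hts : t = f (k⁻¹ * b) := by rw [map_mul, hbt, map_inv, inv_mul_cancel_left]
    subst hts
    exact ⟨_, (key _).1 ht, rfl⟩
  · rintro ⟨s, hs, rfl⟩
    exact (key s).2 hs

lemma folnerInvariant_image_iff {H : Type*} [Group H] {f : H →* G}
    (hf : Function.Injective f) {K F : Set H} {δ : ℝ} :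
    FolnerInvariant (f '' K) (f '' F) δ ↔ FolnerInvariant K F δ := by
  rw [FolnerInvariant, FolnerInvariant, kBoundary_image_of_injective hf,
    ncard_image_of_injective _ hf, ncard_image_of_injective _ hf]

theorem FolnerInvariant.mul {A B K : Set G} {δ : ℝ} (hA : A.Finite) (hB : B.Finite)
    (hK : K.Finite) (hAB : (A ×ˢ B).InjOn fun p => p.1 * p.2)
    (h : ∀ a ∈ A, FolnerInvariant ((fun k => a⁻¹ * k * a) '' K) B δ) :
    FolnerInvariant K (A * B) δ := by
  set D : G → Set G := fun a => kBoundary ((fun k => a⁻¹ * k * a) '' K) B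
  have hcard : (A * B).ncard = A.ncard * B.ncard := by
    rw [← image_mul_prod, hAB.ncard_image, ncard_prod]
  have hsub : kBoundary K (A * B) ⊆ ⋃ a ∈ hA.toFinset, a • D a := by
    rw [show A * B = ⋃ a ∈ A, a • B from (iUnion_smul_set A B).symm]
    refine (kBoundary_biUnion_subset K A _).trans ?_
    simp only [kBoundary_smul_set, Finite.mem_toFinset, subset_rfl, D]
  have hfin : (⋃ a ∈ hA.toFinset, a • D a).Finite :=
    (Finset.finite_toSet _).biUnion fun a _ =>
      (((hK.image _).inv.mul hB).subset (kBoundary_subset_inv_mul _ _)).smul_set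
  calc ((kBoundary K (A * B)).ncard : ℝ)
      ≤ ∑ a ∈ hA.toFinset, ((D a).ncard : ℝ) := by
        exact_mod_cast (ncard_le_ncard hsub hfin).trans <| by
          simpa only [ncard_smul_set] using hA.toFinset.set_ncard_biUnion_le fun a => a • D a
    _ ≤ ∑ _a ∈ hA.toFinset, δ * B.ncard :=
        Finset.sum_le_sum fun a ha => h a (hA.mem_toFinset.1 ha)
    _ = δ * (A * B).ncard := by
        rw [Finset.sum_const, nsmul_eq_mul, hcard, ncard_eq_toFinset_card A hA]
        push_cast
        ring

end Boundary

lemma SemidirectProduct.image_inl_conj_inr {N G : Type*} [Group N] [Group G]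
    (φ : G →* MulAut N) (x : G) (K : Set N) :
    (fun k => (inr x)⁻¹ * k * inr x) '' (inl '' K : Set (N ⋊[φ] G)) =
      inl '' (((φ x)⁻¹ : MulAut N) '' K) := by
  rw [image_image, image_image]
  exact image_congr fun k _ => by rw [inl_aut_inv, map_inv]

theorem rectangle_invariant_general {H : Type*} [Group H] (α : MulAut H)
    (I : Set ℤ) (hI : I.Finite) (B : Set H) (hB : B.Finite)
    (K : Set H) (hK : K.Finite) (δ : ℝ)
    (g : H ⋊[zpowersHom (MulAut H) α] Multiplicative ℤ)
    (hg : g = inr (Multiplicative.ofAdd (1 : ℤ)))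
    (hinj : ∀ i₁ ∈ I, ∀ i₂ ∈ I, ∀ b₁ ∈ B, ∀ b₂ ∈ B,
      g ^ i₁ * (inl b₁ : H ⋊[zpowersHom (MulAut H) α] Multiplicative ℤ) =
        g ^ i₂ * inl b₂ → i₁ = i₂ ∧ b₁ = b₂)
    (hBinv : ∀ i ∈ I, FolnerInvariant ((α ^ (-i) : MulAut H) '' K) B δ) :
    FolnerInvariant
      ((inl : H →* H ⋊[zpowersHom (MulAut H) α] Multiplicative ℤ) '' K)
      {x | ∃ i ∈ I, ∃ b ∈ B,
        x = g ^ i * (inl b : H ⋊[zpowersHom (MulAut H) α] Multiplicative ℤ)} δ := by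
  have hg_zpow : ∀ i : ℤ, g ^ i = inr (Multiplicative.ofAdd i) := fun i => by
    rw [hg, ← map_zpow, ← ofAdd_zsmul, smul_eq_mul, mul_one]
  have hrect : {x | ∃ i ∈ I, ∃ b ∈ B, x = g ^ i * inl b} = (g ^ ·) '' I * inl '' B := by
    ext x
    simp only [mem_mul, mem_image, mem_ofPred_eq]
    aesop
  rw [hrect]
  refine FolnerInvariant.mul (hI.image _) (hB.image _) (hK.image _) ?_ ?_
  · rintro ⟨-, -⟩ ⟨⟨i₁, hi₁, rfl⟩, b₁, hb₁, rfl⟩ ⟨-, -⟩ ⟨⟨i₂, hi₂, rfl⟩, b₂, hb₂, rfl⟩ heq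
    obtain ⟨rfl, rfl⟩ := hinj i₁ hi₁ i₂ hi₂ b₁ hb₁ b₂ hb₂ heq
    rfl
  · rintro - ⟨i, hi, rfl⟩
    dsimp only
    rw [hg_zpow, image_inl_conj_inr, folnerInvariant_image_iff inl_injective, zpowersHom_apply,
      ← zpow_neg]
    exact hBinv i hi

/-- In `G = H ⋊_α ℤ`: let `A = { g^i : i ∈ I } ⊆ ⟨g⟩` and `B ⊆ H` be finite sets whose
products `a b` are pairwise distinct, let `K ⊆ H` be finite and `δ > 0`. If for every
`g^i ∈ A` the set `B` is `(α^{-i}(K), δ)`-invariant in `H`, then the rectangle `AB` is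
`(K, δ)`-invariant in `G`. -/
theorem rectangle_invariant {H : Type*} [Group H] (α : MulAut H)
    (I : Set ℤ) (hI : I.Finite) (B : Set H) (hB : B.Finite)
    (K : Set H) (hK : K.Finite) (δ : ℝ) (hδ : 0 < δ)
    (g : H ⋊[zpowersHom (MulAut H) α] Multiplicative ℤ)
    (hg : g = inr (Multiplicative.ofAdd (1 : ℤ)))
    (hinj : ∀ i₁ ∈ I, ∀ i₂ ∈ I, ∀ b₁ ∈ B, ∀ b₂ ∈ B,
      g ^ i₁ * (inl b₁ : H ⋊[zpowersHom (MulAut H) α] Multiplicative ℤ) =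
        g ^ i₂ * inl b₂ → i₁ = i₂ ∧ b₁ = b₂)
    (hBinv : ∀ i ∈ I, FolnerInvariant ((α ^ (-i) : MulAut H) '' K) B δ) :
    FolnerInvariant
      ((inl : H →* H ⋊[zpowersHom (MulAut H) α] Multiplicative ℤ) '' K)
      {x | ∃ i ∈ I, ∃ b ∈ B,
        x = g ^ i * (inl b : H ⋊[zpowersHom (MulAut H) α] Multiplicative ℤ)} δ :=
  rectangle_invariant_general α I hI B hB K hK δ g hg hinj hBinv
end
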